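/- arXiv:2410.12721 — 4 statements merged into one kernel-verified Lean document; each statement's English description precedes it below -/
import Mathlib

section
/- Pythagorean identity for Bregman projections onto affine sets: let f : ℝ^d → ℝ be differentiable and strictly convex, S ⊆ ℝ^d an affine subspace, q ∈ ℝ^d, and suppose p' ∈ S minimizes B_f(·, q) over S. Then for every p ∈ S, B_f(p, q) = B_f(p, p') + B_f(p', q). -/
/-!
Expanding the definitions gives the three-point identity
`B(p, q) = B(p, p') + B(p', q) + ⟪∇f p' - ∇f q, p - p'⟫`, so it suffices that the inner product
vanishes. It is the derivative of `B(·, q)` at `p'` in the direction `p - p'`, and this direction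
together with its negative is tangent to the affine set `S`, so Fermat's rule at the minimiser `p'`
makes it zero.
-/

open Real
open scoped InnerProductSpace

theorem IsMinOn.hasFDerivAt_eq_zero_of_mem_direction {E : Type*} [NormedAddCommGroup E]
    [NormedSpace ℝ E] {g : E → ℝ} {g' : StrongDual ℝ E} {S : AffineSubspace ℝ E} {a v : E}
    (hmin : IsMinOn g S a) (ha : a ∈ S) (hg : HasFDerivAt g g' a) (hv : v ∈ S.direction) :
    g' v = 0 := by
  have mem_cone : ∀ w ∈ S.direction, w ∈ posTangentConeAt (S : Set E) a := fun w hw =>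
    mem_posTangentConeAt_of_segment_subset <| S.convex.segment_subset ha <| by
      simpa [add_comm] using S.vadd_mem_of_mem_direction hw ha
  exact hmin.localize.hasFDerivWithinAt_eq_zero hg.hasFDerivWithinAt (mem_cone v hv)
    (mem_cone (-v) (neg_mem hv))

section Bregman

variable {F : Type*} [NormedAddCommGroup F] [InnerProductSpace ℝ F]

def bregman (f : F → ℝ) (f' : F → F) (p q : F) : ℝ :=
  f p - f q - ⟪f' q, p - q⟫_ℝ

theorem bregman_eq_add_add_inner (f : F → ℝ) (f' : F → F) (p p' q : F) :
    bregman f f' p q = bregman f f' p p' + bregman f f' p' q + ⟪f' p' - f' q, p - p'⟫_ℝ := by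
  have hsplit : p - q = (p - p') + (p' - q) := (sub_add_sub_cancel p p' q).symm
  simp only [bregman, hsplit, inner_add_right, inner_sub_left]
  ring

theorem hasFDerivAt_bregman_left [CompleteSpace F] {f : F → ℝ} {f' : F → F} {x : F}
    (hf : HasGradientAt f (f' x) x) (q : F) :
    HasFDerivAt (bregman f f' · q) (InnerProductSpace.toDual ℝ F (f' x - f' q)) x := by
  have hlin : HasFDerivAt (fun p => ⟪f' q, p - q⟫_ℝ) (InnerProductSpace.toDual ℝ F (f' q)) x :=
    (innerSL ℝ (f' q)).hasFDerivAt.comp x (hasFDerivAt_sub_const q)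
  rw [map_sub]
  exact (hf.hasFDerivAt.sub_const (f q)).sub hlin

theorem inner_sub_gradient_eq_zero_of_isMinOn_bregman [CompleteSpace F] {f : F → ℝ}
    {f' : F → F} {S : AffineSubspace ℝ F} {q p' p : F} (hf : HasGradientAt f (f' p') p')
    (hp' : p' ∈ S) (hmin : IsMinOn (bregman f f' · q) S p') (hp : p ∈ S) :
    ⟪f' p' - f' q, p - p'⟫_ℝ = 0 := by
  simpa [inner_sub_left] using
    hmin.hasFDerivAt_eq_zero_of_mem_direction hp' (hasFDerivAt_bregman_left hf q)
      (S.vsub_mem_direction hp hp')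

end Bregman

theorem stmt_8_general {d : ℕ} (f : EuclideanSpace ℝ (Fin d) → ℝ)
    (f' : EuclideanSpace ℝ (Fin d) → EuclideanSpace ℝ (Fin d))
    (hf' : ∀ x, HasGradientAt f (f' x) x)
    (S : AffineSubspace ℝ (EuclideanSpace ℝ (Fin d)))
    (q p' : EuclideanSpace ℝ (Fin d)) (hp'S : p' ∈ S)
    (hmin : ∀ p ∈ S, f p' - f q - ⟪f' q, p' - q⟫_ℝ ≤ f p - f q - ⟪f' q, p - q⟫_ℝ) :
    ∀ p ∈ S, f p - f q - ⟪f' q, p - q⟫_ℝ =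
      (f p - f p' - ⟪f' p', p - p'⟫_ℝ) + (f p' - f q - ⟪f' q, p' - q⟫_ℝ) := by
  intro p hp
  have horth : ⟪f' p' - f' q, p - p'⟫_ℝ = 0 :=
    inner_sub_gradient_eq_zero_of_isMinOn_bregman (hf' p') hp'S (isMinOn_iff.2 hmin) hp
  simpa only [bregman, horth, add_zero] using bregman_eq_add_add_inner f f' p p' q

/-- Pythagorean identity for Bregman projections onto affine subspaces:
if `p'` minimizes the Bregman divergence `B_f(·, q)` of a differentiable strictly convex
`f` over an affine subspace `S`, then `B_f(p,q) = B_f(p,p') + B_f(p',q)` for all `p ∈ S`. -/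
theorem stmt_8 {d : ℕ} (f : EuclideanSpace ℝ (Fin d) → ℝ)
    (f' : EuclideanSpace ℝ (Fin d) → EuclideanSpace ℝ (Fin d))
    (hf : StrictConvexOn ℝ Set.univ f)
    (hf' : ∀ x, HasGradientAt f (f' x) x)
    (S : AffineSubspace ℝ (EuclideanSpace ℝ (Fin d)))
    (q p' : EuclideanSpace ℝ (Fin d)) (hp'S : p' ∈ S)
    (hmin : ∀ p ∈ S, f p' - f q - ⟪f' q, p' - q⟫_ℝ ≤ f p - f q - ⟪f' q, p - q⟫_ℝ) :
    ∀ p ∈ S, f p - f q - ⟪f' q, p - q⟫_ℝ =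
      (f p - f p' - ⟪f' p', p - p'⟫_ℝ) + (f p' - f q - ⟪f' q, p' - q⟫_ℝ) :=
  stmt_8_general f f' hf' S q p' hp'S hmin
end

section
/- Pythagorean inequality for Bregman projections onto convex sets: let f : ℝ^d → ℝ be differentiable and strictly convex, S ⊆ ℝ^d a closed convex set, q ∈ ℝ^d, and let p' ∈ S be the minimizer of B_f(·, q) over S. Then for every p ∈ S, B_f(p, q) ≥ B_f(p, p') + B_f(p', q). -/
open scoped InnerProductSpace

/-! The three-point identity `B(p,q) = B(p,p') + B(p',q) + ⟪∇f p' - ∇f q, p - p'⟫` reduces the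
claim to the sign of the last term, and that term is the first-order optimality condition for
`p'` minimizing the differentiable function `B(·,q)` over the convex set `S`: the derivative of
`B(·,q)` at `p'` is `⟪∇f p' - ∇f q, ·⟫`, and it is nonnegative in every direction `p - p'`
pointing into `S`. -/

section

variable {E : Type*} [NormedAddCommGroup E] [InnerProductSpace ℝ E]

/-- `B_f(p, q)`, with `f'` standing for `∇f`. -/
def bregmanDiv (f : E → ℝ) (f' : E → E) (p q : E) : ℝ :=
  f p - f q - ⟪f' q, p - q⟫_ℝ

theorem bregmanDiv_eq_add_add_inner (f : E → ℝ) (f' : E → E) (p r q : E) :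
    bregmanDiv f f' p q =
      bregmanDiv f f' p r + bregmanDiv f f' r q + ⟪f' r - f' q, p - r⟫_ℝ := by
  have hsplit : p - q = (p - r) + (r - q) := (sub_add_sub_cancel p r q).symm
  simp only [bregmanDiv, hsplit, inner_add_right, inner_sub_left]
  ring

theorem IsMinOn.hasFDerivAt_sub_nonneg {F : Type*} [NormedAddCommGroup F] [NormedSpace ℝ F]
    {g : F → ℝ} {g' : F →L[ℝ] ℝ} {s : Set F} {x y : F} (hmin : IsMinOn g s x)
    (hg : HasFDerivAt g g' x) (hs : Convex ℝ s) (hx : x ∈ s) (hy : y ∈ s) :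
    0 ≤ g' (y - x) :=
  hmin.localize.hasFDerivWithinAt_nonneg hg.hasFDerivWithinAt
    (sub_mem_posTangentConeAt_of_segment_subset (hs.segment_subset hx hy))

theorem hasFDerivAt_bregmanDiv_left [CompleteSpace E] {f : E → ℝ} {f' : E → E} {p q : E}
    (hf : HasGradientAt f (f' p) p) :
    HasFDerivAt (bregmanDiv f f' · q)
      (InnerProductSpace.toDual ℝ E (f' p) - innerSL ℝ (f' q)) p := by
  have hlin : HasFDerivAt (fun x => ⟪f' q, x - q⟫_ℝ) (innerSL ℝ (f' q)) p := by
    simp only [inner_sub_right]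
    exact (innerSL ℝ (f' q)).hasFDerivAt.sub_const _
  exact (hf.hasFDerivAt.sub_const (f q)).sub hlin

theorem inner_sub_nonneg_of_isMinOn_bregmanDiv [CompleteSpace E] {f : E → ℝ} {f' : E → E}
    {S : Set E} {p p' q : E} (hf : HasGradientAt f (f' p') p') (hS : Convex ℝ S)
    (hp' : p' ∈ S) (hmin : IsMinOn (bregmanDiv f f' · q) S p') (hp : p ∈ S) :
    0 ≤ ⟪f' p' - f' q, p - p'⟫_ℝ := by
  simpa [inner_sub_left] using
    hmin.hasFDerivAt_sub_nonneg (hasFDerivAt_bregmanDiv_left hf) hS hp' hp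

theorem bregmanDiv_add_le_of_isMinOn [CompleteSpace E] {f : E → ℝ} {f' : E → E}
    {S : Set E} {p p' q : E} (hf : HasGradientAt f (f' p') p') (hS : Convex ℝ S)
    (hp' : p' ∈ S) (hmin : IsMinOn (bregmanDiv f f' · q) S p') (hp : p ∈ S) :
    bregmanDiv f f' p p' + bregmanDiv f f' p' q ≤ bregmanDiv f f' p q := by
  rw [bregmanDiv_eq_add_add_inner f f' p p' q]
  linarith [inner_sub_nonneg_of_isMinOn_bregmanDiv hf hS hp' hmin hp]

end

theorem stmt_9_general {d : ℕ} (f : EuclideanSpace ℝ (Fin d) → ℝ)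
    (f' : EuclideanSpace ℝ (Fin d) → EuclideanSpace ℝ (Fin d))
    (hf' : ∀ x, HasGradientAt f (f' x) x)
    (S : Set (EuclideanSpace ℝ (Fin d))) (hScv : Convex ℝ S)
    (q p' : EuclideanSpace ℝ (Fin d)) (hp'S : p' ∈ S)
    (hmin : ∀ p ∈ S, f p' - f q - ⟪f' q, p' - q⟫_ℝ ≤ f p - f q - ⟪f' q, p - q⟫_ℝ) :
    ∀ p ∈ S, f p - f q - ⟪f' q, p - q⟫_ℝ ≥
      (f p - f p' - ⟪f' p', p - p'⟫_ℝ) + (f p' - f q - ⟪f' q, p' - q⟫_ℝ) :=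
  fun _ hp => bregmanDiv_add_le_of_isMinOn (hf' p') hScv hp'S hmin hp

/-- Pythagorean inequality for Bregman projections onto closed convex sets:
if `p' ∈ S` minimizes the Bregman divergence `B_f(·, q)` of a differentiable strictly
convex `f` over a closed convex `S`, then `B_f(p,q) ≥ B_f(p,p') + B_f(p',q)` for `p ∈ S`. -/
theorem stmt_9 {d : ℕ} (f : EuclideanSpace ℝ (Fin d) → ℝ)
    (f' : EuclideanSpace ℝ (Fin d) → EuclideanSpace ℝ (Fin d))
    (hf : StrictConvexOn ℝ Set.univ f)
    (hf' : ∀ x, HasGradientAt f (f' x) x)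
    (S : Set (EuclideanSpace ℝ (Fin d))) (hSc : IsClosed S) (hScv : Convex ℝ S)
    (q p' : EuclideanSpace ℝ (Fin d)) (hp'S : p' ∈ S)
    (hmin : ∀ p ∈ S, f p' - f q - ⟪f' q, p' - q⟫_ℝ ≤ f p - f q - ⟪f' q, p - q⟫_ℝ) :
    ∀ p ∈ S, f p - f q - ⟪f' q, p - q⟫_ℝ ≥
      (f p - f p' - ⟪f' p', p - p'⟫_ℝ) + (f p' - f q - ⟪f' q, p' - q⟫_ℝ) :=
  stmt_9_general f f' hf' S hScv q p' hp'S hmin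
end

section
/- Exact entropy-decay identity for the alternating half-step: let π_t be a full-support probability distribution on T, let π_{t+1}(x,y) = P[y|x]·(π_t)_X(x) be the half-step update, and let π_ES be a full-support distribution on T with y|x-conditionals P[y|x] (so π_ES ∈ S₁). Then D_RKL(π_ES, π_t) = D_RKL(π_ES, π_{t+1}) + D_RKL(π_{t+1}, π_t), i.e. D_KL(π_t, π_ES) = D_KL(π_{t+1}, π_ES) + D_KL(π_t, π_{t+1}). -/
open Real Finset

/-- Exact entropy-decay identity for the alternating half-step:
`D_KL(pit, piES) = D_KL(pinext, piES) + D_KL(pit, pinext)`, where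
`pinext(x,y) = P[y|x]·(pit)_X(x)` is the half-step update and `piES` is a full-support
distribution on `T` with `y|x`-conditionals `P`. -/
theorem stmt_13 {X Y : Type*} [Fintype X] [Fintype Y] [Nonempty X] [Nonempty Y]
    (P : X → Y → ℝ) (hPnn : ∀ x y, 0 ≤ P x y) (hP1 : ∀ x, ∑ y, P x y = 1)
    (pit piES : X × Y → ℝ)
    (hsupp : ∀ z : X × Y, (0 < P z.1 z.2 → 0 < pit z) ∧ (P z.1 z.2 = 0 → pit z = 0))
    (hsum : ∑ z, pit z = 1)
    (hESsupp : ∀ z : X × Y, (0 < P z.1 z.2 → 0 < piES z) ∧ (P z.1 z.2 = 0 → piES z = 0))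
    (hESsum : ∑ z, piES z = 1)
    (hEScond : ∀ z : X × Y, piES z = P z.1 z.2 * ∑ y', piES (z.1, y')) :
    ∑ z, pit z * Real.log (pit z / piES z) =
      (∑ z, (P z.1 z.2 * ∑ y', pit (z.1, y')) *
          Real.log ((P z.1 z.2 * ∑ y', pit (z.1, y')) / piES z))
        + ∑ z, pit z * Real.log (pit z / (P z.1 z.2 * ∑ y', pit (z.1, y'))) := by
  classical
  set m : X → ℝ := fun x => ∑ y', pit (x, y') with hm
  set mE : X → ℝ := fun x => ∑ y', piES (x, y') with hmE
  set f : X → ℝ := fun x => Real.log (m x / mE x) with hf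
  have hpitnn : ∀ z, 0 ≤ pit z := by
    intro z
    rcases (hPnn z.1 z.2).lt_or_eq with h | h
    · exact le_of_lt ((hsupp z).1 h)
    · exact le_of_eq ((hsupp z).2 h.symm).symm
  have hpiESnn : ∀ z, 0 ≤ piES z := by
    intro z
    rcases (hPnn z.1 z.2).lt_or_eq with h | h
    · exact le_of_lt ((hESsupp z).1 h)
    · exact le_of_eq ((hESsupp z).2 h.symm).symm
  have hy : ∀ x : X, ∃ y : Y, 0 < P x y := by
    intro x
    by_contra h
    push_neg at h
    have : ∀ y : Y, P x y = 0 := fun y => le_antisymm (h y) (hPnn x y)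
    have := hP1 x
    simp [this, ‹∀ y : Y, P x y = 0›] at this
  have hmpos : ∀ x, 0 < m x := by
    intro x
    obtain ⟨y, hyp⟩ := hy x
    exact Finset.sum_pos' (fun y' _ => hpitnn (x, y'))
      ⟨y, Finset.mem_univ y, (hsupp (x, y)).1 hyp⟩
  have hmEpos : ∀ x, 0 < mE x := by
    intro x
    obtain ⟨y, hyp⟩ := hy x
    exact Finset.sum_pos' (fun y' _ => hpiESnn (x, y'))
      ⟨y, Finset.mem_univ y, (hESsupp (x, y)).1 hyp⟩
  have key1 : ∀ z : X × Y, pit z * Real.log (pit z / piES z)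
      = pit z * Real.log (pit z / (P z.1 z.2 * m z.1)) + pit z * f z.1 := by
    intro z
    rcases (hPnn z.1 z.2).lt_or_eq with h | h
    · have hpit := (hsupp z).1 h
      have hpm : 0 < P z.1 z.2 * m z.1 := mul_pos h (hmpos z.1)
      have hratio : pit z / piES z
          = (pit z / (P z.1 z.2 * m z.1)) * (m z.1 / mE z.1) := by
        rw [hEScond z]
        have h1 : P z.1 z.2 ≠ 0 := ne_of_gt h
        have h2 : m z.1 ≠ 0 := ne_of_gt (hmpos z.1)
        have h3 : mE z.1 ≠ 0 := ne_of_gt (hmEpos z.1)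
        field_simp
        ring_nf
        exact mul_inv_cancel₀ h3
      rw [hratio, Real.log_mul (ne_of_gt (div_pos hpit hpm))
        (ne_of_gt (div_pos (hmpos z.1) (hmEpos z.1))), mul_add]
    · have : pit z = 0 := (hsupp z).2 h.symm
      simp [this]
  have key2 : ∀ z : X × Y, (P z.1 z.2 * m z.1) *
      Real.log ((P z.1 z.2 * m z.1) / piES z) = (P z.1 z.2 * m z.1) * f z.1 := by
    intro z
    rcases (hPnn z.1 z.2).lt_or_eq with h | h
    · congr 1
      rw [hEScond z]
      congr 1
      rw [mul_div_mul_left _ _ (ne_of_gt h)]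
    · rw [← h]
      ring
  have hmid : ∑ z : X × Y, pit z * f z.1 = ∑ z : X × Y, (P z.1 z.2 * m z.1) * f z.1 := by
    rw [Fintype.sum_prod_type, Fintype.sum_prod_type]
    apply Finset.sum_congr rfl
    intro x _
    have : ∑ y, pit (x, y) * f x = m x * f x := by
      rw [hm, ← Finset.sum_mul]
    rw [this]
    have : ∑ y, (P x y * m x) * f x = (∑ y, P x y) * (m x * f x) := by
      rw [Finset.sum_mul]
      exact Finset.sum_congr rfl fun y _ => by ring
    rw [this, hP1 x, one_mul]
  calc ∑ z, pit z * Real.log (pit z / piES z)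
      = ∑ z : X × Y, (pit z * Real.log (pit z / (P z.1 z.2 * m z.1)) + pit z * f z.1) :=
        Finset.sum_congr rfl fun z _ => key1 z
    _ = (∑ z : X × Y, pit z * Real.log (pit z / (P z.1 z.2 * m z.1)))
        + ∑ z : X × Y, pit z * f z.1 := Finset.sum_add_distrib
    _ = (∑ z : X × Y, (P z.1 z.2 * m z.1) * f z.1)
        + ∑ z : X × Y, pit z * Real.log (pit z / (P z.1 z.2 * m z.1)) := by
          rw [hmid]; ring
    _ = _ := by
          congr 1
          exact Finset.sum_congr rfl fun z _ => (key2 z).symm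
end

section
/- Monotonicity of KL divergence along alternating half-steps: with π_{t+1}(x,y) = P[y|x]·(π_t)_X(x) the half-step update and π_ES a full-support distribution on T with y|x-conditionals P[y|x], one has D_KL(π_{t+1}, π_ES) ≤ D_KL(π_t, π_ES) for any full-support distribution π_t on T. -/
/-!
The update `π_{t+1}` keeps the `X`-marginal `a` of `π_t` and takes its conditionals from `π_ES`,
so its divergence from `π_ES` collapses to the divergence `∑ₓ a x log (a x / b x)` of the
marginals, `b` being the `X`-marginal of `π_ES`. For each `x`, the log-sum inequality bounds
`a x log (a x / b x)` by the `x`-row `∑ y, π_t (x, y) log (π_t (x, y) / π_ES (x, y))`;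
summing over `x` gives the claim.
-/

open Real Finset

lemma sub_le_mul_log_div {p q : ℝ} (hp : 0 ≤ p) (hq : 0 < q) : p - q ≤ p * log (p / q) := by
  rcases hp.eq_or_lt with rfl | hp
  · simpa using hq.le
  · have h := one_sub_inv_le_log_of_pos (div_pos hp hq)
    rw [inv_div] at h
    have : p * (1 - q / p) = p - q := by field_simp
    nlinarith

/-- The log-sum inequality. -/
theorem sum_mul_log_div_sum_le {ι : Type*} (s : Finset ι) (p q : ι → ℝ)
    (hp : ∀ i ∈ s, 0 ≤ p i) (hq : ∀ i ∈ s, 0 ≤ q i) (hpq : ∀ i ∈ s, q i = 0 → p i = 0) :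
    (∑ i ∈ s, p i) * log ((∑ i ∈ s, p i) / ∑ i ∈ s, q i) ≤ ∑ i ∈ s, p i * log (p i / q i) := by
  rcases (sum_nonneg hp).eq_or_lt with hA | hA
  · have hp0 := (sum_eq_zero_iff_of_nonneg hp).1 hA.symm
    rw [← hA, zero_mul, sum_eq_zero fun i hi => by rw [hp0 i hi, zero_mul]]
  have hB : 0 < ∑ i ∈ s, q i := by
    refine (sum_nonneg hq).lt_of_ne fun hB => hA.ne' (sum_eq_zero fun i hi => hpq i hi ?_)
    exact (sum_eq_zero_iff_of_nonneg hq).1 hB.symm i hi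
  obtain ⟨r, hr_def⟩ : ∃ r, (∑ i ∈ s, p i) / ∑ i ∈ s, q i = r := ⟨_, rfl⟩
  have hr : 0 < r := hr_def ▸ div_pos hA hB
  rw [hr_def]
  -- Compare each `p i` with `q i` rescaled to the same total mass.
  have hterm : ∀ i ∈ s, p i - q i * r + p i * log r ≤ p i * log (p i / q i) := by
    intro i hi
    rcases (hp i hi).eq_or_lt with h0 | hpi
    · rw [← h0]
      nlinarith [hq i hi]
    · have hqi : 0 < q i := (hq i hi).lt_of_ne fun h => hpi.ne' (hpq i hi h.symm)
      have h := sub_le_mul_log_div hpi.le (mul_pos hqi hr)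
      rw [← div_div, log_div (div_pos hpi hqi).ne' hr.ne'] at h
      linarith
  calc (∑ i ∈ s, p i) * log r = ∑ i ∈ s, (p i - q i * r + p i * log r) := by
        rw [sum_add_distrib, sum_sub_distrib, ← sum_mul, ← sum_mul, ← hr_def,
          mul_div_cancel₀ _ hB.ne']
        ring
    _ ≤ ∑ i ∈ s, p i * log (p i / q i) := sum_le_sum hterm

lemma sum_mul_log_div_of_eq_mul {ι : Type*} (s : Finset ι) (P q : ι → ℝ) (a b : ℝ)
    (hP : ∑ i ∈ s, P i = 1) (hq : ∀ i ∈ s, q i = P i * b) :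
    ∑ i ∈ s, P i * a * log (P i * a / q i) = a * log (a / b) := by
  have hterm : ∀ i ∈ s, P i * a * log (P i * a / q i) = P i * (a * log (a / b)) := by
    intro i hi
    by_cases h : P i = 0
    · simp [h]
    · rw [hq i hi, mul_div_mul_left _ _ h, mul_assoc]
  rw [sum_congr rfl hterm, ← sum_mul, hP, one_mul]

theorem stmt_14_general {X Y : Type*} [Fintype X] [Fintype Y]
    (P : X → Y → ℝ) (hPnn : ∀ x y, 0 ≤ P x y) (hP1 : ∀ x, ∑ y, P x y = 1)
    (pit piES : X × Y → ℝ)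
    (hsupp : ∀ z : X × Y, (0 < P z.1 z.2 → 0 < pit z) ∧ (P z.1 z.2 = 0 → pit z = 0))
    (hESsupp : ∀ z : X × Y, (0 < P z.1 z.2 → 0 < piES z) ∧ (P z.1 z.2 = 0 → piES z = 0))
    (hEScond : ∀ z : X × Y, piES z = P z.1 z.2 * ∑ y', piES (z.1, y')) :
    ∑ z, (P z.1 z.2 * ∑ y', pit (z.1, y')) *
        Real.log ((P z.1 z.2 * ∑ y', pit (z.1, y')) / piES z) ≤
      ∑ z, pit z * Real.log (pit z / piES z) := by
  have hpit : ∀ z, 0 ≤ pit z := fun z =>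
    (hPnn z.1 z.2).eq_or_lt.elim (fun h => ((hsupp z).2 h.symm).ge) fun h => ((hsupp z).1 h).le
  have hES : ∀ z, 0 ≤ piES z := fun z =>
    (hPnn z.1 z.2).eq_or_lt.elim (fun h => ((hESsupp z).2 h.symm).ge) fun h => ((hESsupp z).1 h).le
  have hac : ∀ z, piES z = 0 → pit z = 0 := fun z h =>
    (hsupp z).2 ((hPnn z.1 z.2).eq_or_lt.resolve_right fun hP => ((hESsupp z).1 hP).ne' h).symm
  calc _ = ∑ x, (∑ y, pit (x, y)) * log ((∑ y, pit (x, y)) / ∑ y, piES (x, y)) := by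
        rw [Fintype.sum_prod_type]
        exact sum_congr rfl fun x _ =>
          sum_mul_log_div_of_eq_mul univ (P x) (fun y => piES (x, y))
            (∑ y, pit (x, y)) (∑ y, piES (x, y)) (hP1 x) fun y _ => hEScond (x, y)
    _ ≤ ∑ x, ∑ y, pit (x, y) * log (pit (x, y) / piES (x, y)) :=
        sum_le_sum fun x _ =>
          sum_mul_log_div_sum_le univ (fun y => pit (x, y)) (fun y => piES (x, y))
          (fun y _ => hpit (x, y)) (fun y _ => hES (x, y)) fun y _ => hac (x, y)
    _ = _ := (Fintype.sum_prod_type fun z => pit z * log (pit z / piES z)).symm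

/-- Monotonicity of KL divergence along alternating half-steps:
`D_KL(pinext, piES) ≤ D_KL(pit, piES)` for the half-step update
`pinext(x,y) = P[y|x]·(pit)_X(x)`. -/
theorem stmt_14 {X Y : Type*} [Fintype X] [Fintype Y] [Nonempty X] [Nonempty Y]
    (P : X → Y → ℝ) (hPnn : ∀ x y, 0 ≤ P x y) (hP1 : ∀ x, ∑ y, P x y = 1)
    (pit piES : X × Y → ℝ)
    (hsupp : ∀ z : X × Y, (0 < P z.1 z.2 → 0 < pit z) ∧ (P z.1 z.2 = 0 → pit z = 0))
    (hsum : ∑ z, pit z = 1)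
    (hESsupp : ∀ z : X × Y, (0 < P z.1 z.2 → 0 < piES z) ∧ (P z.1 z.2 = 0 → piES z = 0))
    (hESsum : ∑ z, piES z = 1)
    (hEScond : ∀ z : X × Y, piES z = P z.1 z.2 * ∑ y', piES (z.1, y')) :
    ∑ z, (P z.1 z.2 * ∑ y', pit (z.1, y')) *
        Real.log ((P z.1 z.2 * ∑ y', pit (z.1, y')) / piES z) ≤
      ∑ z, pit z * Real.log (pit z / piES z) :=
  stmt_14_general P hPnn hP1 pit piES hsupp hESsupp hEScond
end
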